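/- Let x, v, q : ℝ × ℝ → ℝ be C^∞ functions of (T,Y) satisfying for all (T,Y) the relation ∂_Y x = q·cos⁴(v/2). If at a point (T₀,Y₀) one has v(T₀,Y₀) = π and ∂_Y v(T₀,Y₀) = 0, then ∂_Y^k x(T₀,Y₀) = 0 for every k = 1, 2, 3, 4, 5, 6, 7. If moreover ∂_T v(T₀,Y₀) = 0 and ∂_T∂_Y v(T₀,Y₀) = 0, then also ∂_T∂_Y^k x(T₀,Y₀) = 0 for every k = 1, 2, 3, 4, 5, 6, 7. -/

import Mathlib

open Real

/-- Partial derivative in the first variable `T`. -/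
noncomputable def pT (f : ℝ × ℝ → ℝ) (p : ℝ × ℝ) : ℝ :=
  deriv (fun s => f (s, p.2)) p.1

/-- Partial derivative in the second variable `Y`. -/
noncomputable def pY (f : ℝ × ℝ → ℝ) (p : ℝ × ℝ) : ℝ :=
  deriv (fun y => f (p.1, y)) p.2

lemma diffY {f : ℝ×ℝ→ℝ} (hf : ContDiff ℝ (⊤ : ℕ∞) f) (t y : ℝ) :
    DifferentiableAt ℝ (fun y' => f (t, y')) y :=
  ((hf.differentiable (by simp)).comp ((differentiable_const t).prodMk differentiable_id)) y

lemma diffT {f : ℝ×ℝ→ℝ} (hf : ContDiff ℝ (⊤ : ℕ∞) f) (t y : ℝ) :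
    DifferentiableAt ℝ (fun t' => f (t', y)) t :=
  ((hf.differentiable (by simp)).comp (differentiable_id.prodMk (differentiable_const y))) t

lemma hasDerivY {f : ℝ×ℝ→ℝ} (hf : ContDiff ℝ (⊤ : ℕ∞) f) (p : ℝ×ℝ) :
    HasDerivAt (fun y' => f (p.1, y')) (pY f p) p.2 :=
  (diffY hf p.1 p.2).hasDerivAt

lemma hasDerivT {f : ℝ×ℝ→ℝ} (hf : ContDiff ℝ (⊤ : ℕ∞) f) (p : ℝ×ℝ) :
    HasDerivAt (fun t' => f (t', p.2)) (pT f p) p.1 :=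
  (diffT hf p.1 p.2).hasDerivAt

lemma contDiff_pY {f : ℝ×ℝ→ℝ} (hf : ContDiff ℝ (⊤ : ℕ∞) f) : ContDiff ℝ (⊤ : ℕ∞) (pY f) := by
  have h1 : pY f = fun p : ℝ×ℝ => fderiv ℝ f p (0,1) := by
    funext p
    have hd : HasFDerivAt f (fderiv ℝ f p) p := (hf.differentiable (by simp) p).hasFDerivAt
    have hline : HasDerivAt (fun y => ((p.1 : ℝ), y)) ((0:ℝ),(1:ℝ)) p.2 := by
      simpa using (HasDerivAt.prodMk (hasDerivAt_const p.2 p.1) (hasDerivAt_id p.2))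
    exact (hd.comp_hasDerivAt p.2 hline).deriv
  rw [h1]
  exact (hf.fderiv_right (by simp)).clm_apply contDiff_const

lemma pY_add {f g : ℝ×ℝ→ℝ} (hf : ContDiff ℝ (⊤ : ℕ∞) f) (hg : ContDiff ℝ (⊤ : ℕ∞) g) :
    pY (fun p => f p + g p) = fun p => pY f p + pY g p := by
  funext p
  exact deriv_add (diffY hf p.1 p.2) (diffY hg p.1 p.2)

lemma pY_iter_add {f g : ℝ×ℝ→ℝ} (hf : ContDiff ℝ (⊤ : ℕ∞) f) (hg : ContDiff ℝ (⊤ : ℕ∞) g) (j : ℕ) :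
    pY^[j] (fun p => f p + g p) = fun p => pY^[j] f p + pY^[j] g p := by
  induction j generalizing f g with
  | zero => rfl
  | succ j ih =>
    rw [Function.iterate_succ_apply, Function.iterate_succ_apply,
      Function.iterate_succ_apply, pY_add hf hg]
    exact ih (contDiff_pY hf) (contDiff_pY hg)

lemma contDiff_pY_iter {f : ℝ×ℝ→ℝ} (hf : ContDiff ℝ (⊤ : ℕ∞) f) (j : ℕ) :
    ContDiff ℝ (⊤ : ℕ∞) (pY^[j] f) := by
  induction j generalizing f with
  | zero => exact hf
  | succ j ih => rw [Function.iterate_succ_apply]; exact ih (contDiff_pY hf)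

lemma pT_add_pt {f g : ℝ×ℝ→ℝ} (hf : ContDiff ℝ (⊤ : ℕ∞) f) (hg : ContDiff ℝ (⊤ : ℕ∞) g) (p : ℝ×ℝ) :
    pT (fun q => f q + g q) p = pT f p + pT g p :=
  deriv_add (diffT hf p.1 p.2) (diffT hg p.1 p.2)

lemma psi_contDiff {c h : ℝ×ℝ→ℝ} (hc : ContDiff ℝ (⊤ : ℕ∞) c) (hh : ContDiff ℝ (⊤ : ℕ∞) h) (m n : ℕ) :
    ContDiff ℝ (⊤ : ℕ∞) (fun p => h p * c p ^ m * pY c p ^ n) :=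
  (hh.mul (hc.pow m)).mul ((contDiff_pY hc).pow n)

lemma psi_deriv {c h : ℝ×ℝ→ℝ} (hc : ContDiff ℝ (⊤ : ℕ∞) c) (hh : ContDiff ℝ (⊤ : ℕ∞) h) (m n : ℕ) :
    pY (fun p => h p * c p ^ m * pY c p ^ n) =
      fun p => (pY h p * c p ^ m * pY c p ^ n
        + (↑m * h p) * c p ^ (m-1) * pY c p ^ (n+1))
        + (↑n * h p * pY (pY c) p) * c p ^ m * pY c p ^ (n-1) := by
  funext p
  have hH := hasDerivY hh p
  have hC := hasDerivY hc p
  have hD := hasDerivY (contDiff_pY hc) p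
  have key : HasDerivAt (fun y => h (p.1, y) * c (p.1, y) ^ m * pY c (p.1, y) ^ n)
      ((pY h p * c p ^ m + h p * (↑m * c p ^ (m-1) * pY c p)) * pY c p ^ n
        + h p * c p ^ m * (↑n * pY c p ^ (n-1) * pY (pY c) p)) p.2 := by
    have h1 := (hH.mul (hC.pow m)).mul (hD.pow n)
    exact h1
  have := key.deriv
  have hpy : pY (fun p => h p * c p ^ m * pY c p ^ n) p
      = deriv (fun y => h (p.1, y) * c (p.1, y) ^ m * pY c (p.1, y) ^ n) p.2 := rfl
  rw [hpy, this]; ring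

lemma keyY {c : ℝ×ℝ→ℝ} (hc : ContDiff ℝ (⊤ : ℕ∞) c) (p₀ : ℝ×ℝ)
    (hc0 : c p₀ = 0) (hcy0 : pY c p₀ = 0) :
    ∀ j m n (h : ℝ×ℝ→ℝ), ContDiff ℝ (⊤ : ℕ∞) h → j + 1 ≤ 2*m + n →
      (pY^[j] (fun p => h p * c p ^ m * pY c p ^ n)) p₀ = 0 := by
  intro j
  induction j with
  | zero =>
    intro m n h hh hw
    simp only [Function.iterate_zero, id_eq]
    rcases Nat.lt_or_ge 0 m with hm | hm
    · rw [hc0, zero_pow (by omega)]; ring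
    · have hn : 0 < n := by omega
      rw [hcy0, zero_pow (by omega)]; ring
  | succ j ih =>
    intro m n h hh hw
    rw [Function.iterate_succ_apply, psi_deriv hc hh m n]
    have hA := psi_contDiff hc (contDiff_pY hh) m n
    have hB := psi_contDiff hc (contDiff_const.mul hh : ContDiff ℝ (⊤ : ℕ∞) (fun p => (↑m : ℝ) * h p)) (m-1) (n+1)
    have hC := psi_contDiff hc ((contDiff_const.mul hh).mul (contDiff_pY (contDiff_pY hc)) :
        ContDiff ℝ (⊤ : ℕ∞) (fun p => (↑n : ℝ) * h p * pY (pY c) p)) m (n-1)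
    rw [pY_iter_add (hA.add hB) hC, pY_iter_add hA hB]
    beta_reduce
    rw [ih m n (pY h) (contDiff_pY hh) (by omega),
      ih (m-1) (n+1) _ (contDiff_const.mul hh) (by omega),
      ih m (n-1) _ ((contDiff_const.mul hh).mul (contDiff_pY (contDiff_pY hc))) (by omega)]
    ring

lemma keyT {c : ℝ×ℝ→ℝ} (hc : ContDiff ℝ (⊤ : ℕ∞) c) (p₀ : ℝ×ℝ)
    (hc0 : c p₀ = 0) (hcy0 : pY c p₀ = 0) (hct0 : pT c p₀ = 0) (hcyt0 : pT (pY c) p₀ = 0) :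
    ∀ j m n (h : ℝ×ℝ→ℝ), ContDiff ℝ (⊤ : ℕ∞) h → j + 1 ≤ 2*m + n →
      pT (pY^[j] (fun p => h p * c p ^ m * pY c p ^ n)) p₀ = 0 := by
  intro j
  induction j with
  | zero =>
    intro m n h hh hw
    simp only [Function.iterate_zero, id_eq]
    have hH := hasDerivT hh p₀
    have hC := hasDerivT hc p₀
    have hD := hasDerivT (contDiff_pY hc) p₀
    have key : HasDerivAt (fun t => h (t, p₀.2) * c (t, p₀.2) ^ m * pY c (t, p₀.2) ^ n)
        ((pT h p₀ * c p₀ ^ m + h p₀ * (↑m * c p₀ ^ (m-1) * pT c p₀)) * pY c p₀ ^ n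
          + h p₀ * c p₀ ^ m * (↑n * pY c p₀ ^ (n-1) * pT (pY c) p₀)) p₀.1 :=
      (hH.mul (hC.pow m)).mul (hD.pow n)
    have hval : pT (fun p => h p * c p ^ m * pY c p ^ n) p₀
        = deriv (fun t => h (t, p₀.2) * c (t, p₀.2) ^ m * pY c (t, p₀.2) ^ n) p₀.1 := rfl
    rw [hval, key.deriv, hct0, hcyt0]
    rcases Nat.lt_or_ge 0 m with hm | hm
    · rw [hc0, zero_pow (by omega)]; ring
    · have hn : 0 < n := by omega
      rw [hcy0, zero_pow (by omega)]; ring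
  | succ j ih =>
    intro m n h hh hw
    rw [Function.iterate_succ_apply, psi_deriv hc hh m n]
    have hA := psi_contDiff hc (contDiff_pY hh) m n
    have hB := psi_contDiff hc (contDiff_const.mul hh : ContDiff ℝ (⊤ : ℕ∞) (fun p => (↑m : ℝ) * h p)) (m-1) (n+1)
    have hC := psi_contDiff hc ((contDiff_const.mul hh).mul (contDiff_pY (contDiff_pY hc)) :
        ContDiff ℝ (⊤ : ℕ∞) (fun p => (↑n : ℝ) * h p * pY (pY c) p)) m (n-1)
    rw [pY_iter_add (hA.add hB) hC, pY_iter_add hA hB]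
    beta_reduce
    rw [pT_add_pt ((contDiff_pY_iter hA j).add (contDiff_pY_iter hB j)) (contDiff_pY_iter hC j) p₀,
      pT_add_pt (contDiff_pY_iter hA j) (contDiff_pY_iter hB j) p₀,
      ih m n (pY h) (contDiff_pY hh) (by omega),
      ih (m-1) (n+1) _ (contDiff_const.mul hh) (by omega),
      ih m (n-1) _ ((contDiff_const.mul hh).mul (contDiff_pY (contDiff_pY hc))) (by omega)]
    ring

lemma pY_cos_half (v : ℝ×ℝ→ℝ) (hv : ContDiff ℝ (⊤ : ℕ∞) v) (p : ℝ×ℝ) :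
    pY (fun q => Real.cos (v q / 2)) p = -Real.sin (v p / 2) * (pY v p / 2) := by
  have hV := hasDerivY hv p
  exact ((Real.hasDerivAt_cos (v p / 2)).comp p.2 (hV.div_const 2)).deriv

lemma pT_cos_half (v : ℝ×ℝ→ℝ) (hv : ContDiff ℝ (⊤ : ℕ∞) v) (p : ℝ×ℝ) :
    pT (fun q => Real.cos (v q / 2)) p = -Real.sin (v p / 2) * (pT v p / 2) := by
  have hV := hasDerivT hv p
  exact ((Real.hasDerivAt_cos (v p / 2)).comp p.1 (hV.div_const 2)).deriv

/-- At a Type I singular point (`v = π`, `v_Y = 0`), the `Y`-derivatives of `x`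
up to order 7 vanish; if moreover `v_T = 0` and `v_{TY} = 0`, the mixed
derivatives `∂_T ∂_Y^k x`, `1 ≤ k ≤ 7`, also vanish. -/
theorem novikov_typeI_x_derivatives_vanish
    (x v q : ℝ × ℝ → ℝ)
    (hx : ContDiff ℝ (⊤ : ℕ∞) x) (hv : ContDiff ℝ (⊤ : ℕ∞) v) (hq : ContDiff ℝ (⊤ : ℕ∞) q)
    (hrel : ∀ p : ℝ × ℝ, pY x p = q p * Real.cos (v p / 2) ^ 4)
    (p₀ : ℝ × ℝ) (hsing : v p₀ = Real.pi) (hvY : pY v p₀ = 0) :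
    (∀ k : ℕ, 1 ≤ k → k ≤ 7 → (pY^[k] x) p₀ = 0) ∧
      (pT v p₀ = 0 → pT (pY v) p₀ = 0 →
        ∀ k : ℕ, 1 ≤ k → k ≤ 7 → pT (pY^[k] x) p₀ = 0) := by
  have hc : ContDiff ℝ (⊤ : ℕ∞) (fun p : ℝ×ℝ => Real.cos (v p / 2)) :=
    Real.contDiff_cos.comp (hv.div_const 2)
  have hc0 : (fun p : ℝ×ℝ => Real.cos (v p / 2)) p₀ = 0 := by
    simp [hsing, Real.cos_pi_div_two]
  have hcyfun : pY (fun p : ℝ×ℝ => Real.cos (v p / 2))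
      = fun p => -Real.sin (v p / 2) * (pY v p / 2) := funext (pY_cos_half v hv)
  have hcy0 : pY (fun p : ℝ×ℝ => Real.cos (v p / 2)) p₀ = 0 := by
    rw [hcyfun]; simp [hvY]
  have hx4 : pY x = fun p => q p * (fun p : ℝ×ℝ => Real.cos (v p / 2)) p ^ 4
      * pY (fun p : ℝ×ℝ => Real.cos (v p / 2)) p ^ 0 := by
    funext p; simp [hrel p]
  constructor
  · intro k hk1 hk7
    obtain ⟨j, rfl⟩ : ∃ j, k = j + 1 := ⟨k - 1, by omega⟩
    rw [Function.iterate_succ_apply, hx4]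
    exact keyY hc p₀ hc0 hcy0 j 4 0 q hq (by omega)
  · intro hvT hvTY k hk1 hk7
    have hct0 : pT (fun p : ℝ×ℝ => Real.cos (v p / 2)) p₀ = 0 := by
      rw [pT_cos_half v hv p₀, hvT]; ring
    have hcyt0 : pT (pY (fun p : ℝ×ℝ => Real.cos (v p / 2))) p₀ = 0 := by
      rw [hcyfun]
      have hVt := hasDerivT hv p₀
      have hA : HasDerivAt (fun t => -Real.sin (v (t, p₀.2) / 2))
          (-(Real.cos (v p₀ / 2) * (pT v p₀ / 2))) p₀.1 :=
        by have h := (Real.hasDerivAt_sin (v p₀ / 2)).comp p₀.1 (hVt.div_const 2); exact h.neg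
      have hB : HasDerivAt (fun t => pY v (t, p₀.2) / 2) (pT (pY v) p₀ / 2) p₀.1 :=
        (hasDerivT (contDiff_pY hv) p₀).div_const 2
      have := HasDerivAt.deriv (f := fun t => -Real.sin (v (t, p₀.2) / 2) * (pY v (t, p₀.2) / 2)) (hA.mul hB)
      have hval : pT (fun p => -Real.sin (v p / 2) * (pY v p / 2)) p₀
          = deriv (fun t => -Real.sin (v (t, p₀.2) / 2) * (pY v (t, p₀.2) / 2)) p₀.1 := rfl
      rw [hval, this, hvY, hvTY]; ring
    obtain ⟨j, rfl⟩ : ∃ j, k = j + 1 := ⟨k - 1, by omega⟩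
    rw [Function.iterate_succ_apply, hx4]
    exact keyT hc p₀ hc0 hcy0 hct0 hcyt0 j 4 0 q hq (by omega)
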